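/- (Matsuo–Cherednik map, KZ side.) Let κ ∈ ℂ, κ ≠ 0, and let U := {(z,λ) ∈ ℂ^N × ℂ^N : the z_j are pairwise distinct and the λ_a are pairwise distinct}. Suppose Ψ : U → V is differentiable and satisfies the twisted KZ equations κ ∂Ψ/∂z_j = B_j Ψ (j = 1,…,N), the dynamical equations κ ∂Ψ/∂λ_a = A_a Ψ (a = 1,…,N), and the weight condition E_{aa} Ψ = Ψ for all a. Then for i ∈ {0,1} the scalar function φ_i := Ω^i ⬝ Ψ satisfies on U the Calogero-type eigenvalue equation κ² ∑_{a=1}^N ∂²φ_i/∂z_a² + ∑_{a≠b} ((−1)^i κ − 1)/(z_a − z_b)² · φ_i = (∑_{a=1}^N λ_a²) φ_i. -/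

import Mathlib

open Finset

namespace Glnm

/-- Parity: `p(a) = 0` for bosonic indices (`a ≤ n` in 1-based terms, i.e. `a.val < n`),
`p(a) = 1` for fermionic ones. -/
def par (n N : ℕ) (a : Fin N) : ℕ := if (a : ℕ) < n then 0 else 1

/-- The Koszul-sign realization `e^{(j)}_{ab} = σ^{p(a)+p(b)} ⊗ ⋯ ⊗ σ^{p(a)+p(b)} ⊗ e_{ab} ⊗ I ⊗ ⋯ ⊗ I`
on `(ℂ^N)^{⊗k}`, realized as matrices indexed by tuples `Fin k → Fin N`. -/
noncomputable def eop (n N k : ℕ) (j : Fin k) (a b : Fin N) :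
    Matrix (Fin k → Fin N) (Fin k → Fin N) ℂ :=
  fun x y =>
    (if x j = a ∧ y j = b then (1 : ℂ) else 0) *
      (-1 : ℂ) ^ ((par n N a + par n N b) *
        ∑ l ∈ Finset.univ.filter (fun l : Fin k => l < j), par n N (x l)) *
      ∏ l ∈ Finset.univ.filter (fun l : Fin k => l ≠ j),
        (if x l = y l then (1 : ℂ) else 0)

/-- `E_{ab} = ∑_{j=1}^k e^{(j)}_{ab}`. -/
noncomputable def Egen (n N k : ℕ) (a b : Fin N) : Matrix (Fin k → Fin N) (Fin k → Fin N) ℂ :=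
  ∑ j : Fin k, eop n N k j a b

/-- The graded permutation `P_{ij} = ∑_{a,b} (−1)^{p(b)} e^{(i)}_{ab} e^{(j)}_{ba}`. -/
noncomputable def Pg (n N k : ℕ) (i j : Fin k) : Matrix (Fin k → Fin N) (Fin k → Fin N) ℂ :=
  ∑ a : Fin N, ∑ b : Fin N,
    ((-1 : ℂ) ^ par n N b) • (eop n N k i a b * eop n N k j b a)

/-- Commutator. -/
def comm {α : Type*} [Ring α] (X Y : α) : α := X * Y - Y * X

/-- Anticommutator. -/
def acomm {α : Type*} [Ring α] (X Y : α) : α := X * Y + Y * X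

/-- The dynamical connection matrix
`A_a = ∑_j z_j e^{(j)}_{aa} + ∑_{b ≠ a} (−1)^{p(b)} (E_{ab}E_{ba} − E_{aa})/(λ_a − λ_b)`. -/
noncomputable def dynA (n N k : ℕ) (z : Fin k → ℂ) (lam : Fin N → ℂ) (a : Fin N) :
    Matrix (Fin k → Fin N) (Fin k → Fin N) ℂ :=
  (∑ j : Fin k, z j • eop n N k j a a) +
    ∑ b ∈ Finset.univ.filter (fun b : Fin N => b ≠ a),
      (((-1 : ℂ) ^ par n N b) / (lam a - lam b)) •
        (Egen n N k a b * Egen n N k b a - Egen n N k a a)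

/-- The (twisted) KZ connection matrix
`B_i = ∑_c λ_c e^{(i)}_{cc} + ∑_{j ≠ i} P_{ij}/(z_i − z_j)`. -/
noncomputable def kzB (n N k : ℕ) (z : Fin k → ℂ) (lam : Fin N → ℂ) (i : Fin k) :
    Matrix (Fin k → Fin N) (Fin k → Fin N) ℂ :=
  (∑ c : Fin N, lam c • eop n N k i c c) +
    ∑ j ∈ Finset.univ.filter (fun j : Fin k => j ≠ i),
      ((z i - z j)⁻¹) • Pg n N k i j

/-- Adjacent graded permutation `P_{s_l} = P_{l,l+1}` (0-based slots). -/
noncomputable def Ps (n N k : ℕ) (l : ℕ) (h : l + 1 < k) :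
    Matrix (Fin k → Fin N) (Fin k → Fin N) ℂ :=
  Pg n N k ⟨l, Nat.lt_of_succ_lt h⟩ ⟨l + 1, h⟩

/-- The highest-configuration vector `e_1 ⊗ ⋯ ⊗ e_N ∈ (ℂ^N)^{⊗N}`. -/
noncomputable def baseVec (N : ℕ) : (Fin N → Fin N) → ℂ :=
  fun x => if x = (fun j => j) then 1 else 0

/-- `Ω^i = ∑_{σ ∈ S_N} (−1)^{i·ℓ(σ)} P_σ (e_1 ⊗ ⋯ ⊗ e_N)`, where `P_σ = ρ σ` for the
(unique) multiplicative extension `ρ` of the adjacent graded permutations. -/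
noncomputable def OmegaVec (N : ℕ) (i : ℕ)
    (ρ : Equiv.Perm (Fin N) →* Matrix (Fin N → Fin N) (Fin N → Fin N) ℂ) :
    (Fin N → Fin N) → ℂ :=
  ∑ σ : Equiv.Perm (Fin N),
    (((Equiv.Perm.sign σ : ℤ) : ℂ) ^ i) • Matrix.mulVec (ρ σ) (baseVec N)

/-- The set of `(z, λ)` with pairwise distinct `z`'s and pairwise distinct `λ`'s. -/
def Usep (N : ℕ) : Set ((Fin N → ℂ) × (Fin N → ℂ)) :=
  {p | (∀ i j : Fin N, i ≠ j → p.1 i ≠ p.1 j) ∧ (∀ a b : Fin N, a ≠ b → p.2 a ≠ p.2 b)}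

end Glnm

/-!
Write `φ = Ω ⬝ Ψ` and `B_a = L_a + C_a` with `L_a = ∑_c λ_c e^{(a)}_{cc}` (a diagonal matrix) and
`C_a = ∑_{j ≠ a} P_{aj}/(z_a - z_j)`. Differentiating twice with the KZ equation gives
`κ² ∂²_a φ = Ω ⬝ B_a² Ψ + κ Ω ⬝ (∂_a B_a) Ψ`, where `∂_a B_a = -∑_{j ≠ a} P_{aj}/(z_a - z_j)²`.
Since `ρ` sends every transposition `(a b)` to `P_{ab}`, the vector `Ω^i` is a `(-1)^i`-eigenvector
of every `P_{ab}`, and these matrices are symmetric, so `Ω ⬝ P_{ab} v = (-1)^i Ω ⬝ v`.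
In `∑_a Ω ⬝ B_a² Ψ` the squares `L_a²` add up to `∑_c λ_c² E_{cc}`, a scalar by the weight
condition; the cross terms cancel because `L_a P_{aj} = P_{aj} L_j` and `1/(z_a - z_j)` is
antisymmetric; and `Ω ⬝ C_a² Ψ = (∑_{j ≠ a} 1/(z_a - z_j))² φ`, which sums over `a` to
`∑_{a ≠ j} φ/(z_a - z_j)²` by the three-term identity
`1/((x - y)(x - w)) + 1/((y - w)(y - x)) + 1/((w - x)(w - y)) = 0`.
-/

open scoped Matrix

namespace Glnm

variable {n N k : ℕ}

lemma par_eq_zero_or_one (a : Fin N) : par n N a = 0 ∨ par n N a = 1 := by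
  unfold par; split <;> simp

lemma neg_one_pow_eq_of_mod_two_eq {R : Type*} [Ring R] {a b : ℕ} (h : a % 2 = b % 2) :
    (-1 : R) ^ a = (-1) ^ b := by
  rw [neg_one_pow_eq_pow_mod_two, h, ← neg_one_pow_eq_pow_mod_two]

/-- The Koszul exponent `∑_{l < j} p(x_l)` appearing in `e^{(j)}_{ab}`. -/
def parBelow (n : ℕ) (x : Fin k → Fin N) (j : Fin k) : ℕ :=
  ∑ l ∈ univ.filter (· < j), par n N (x l)

def betw (i j : Fin k) : Finset (Fin k) :=
  univ.filter fun l => (i < l ∧ l < j) ∨ (j < l ∧ l < i)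

lemma betw_comm (i j : Fin k) : betw i j = betw j i := by
  ext l; simp [betw, or_comm]

lemma mem_betw {i j l : Fin k} : l ∈ betw i j ↔ (i < l ∧ l < j) ∨ (j < l ∧ l < i) := by
  simp [betw]

lemma eop_apply (j : Fin k) (a b : Fin N) (x y : Fin k → Fin N) :
    eop n N k j a b x y =
      if x j = a ∧ y = Function.update x j b then
        (-1 : ℂ) ^ ((par n N a + par n N b) * parBelow n x j)
      else 0 := by
  have hy : y = Function.update x j b ↔ y j = b ∧ ∀ l ∈ univ.filter (· ≠ j), x l = y l := by
    simp only [funext_iff, mem_filter, mem_univ, true_and]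
    refine ⟨fun h => ⟨by simp [h], fun l hl => by simp [h, hl]⟩, fun ⟨hj, h⟩ l => ?_⟩
    by_cases hl : l = j
    · subst hl; simp [hj]
    · simp [hl, h l hl]
  simp only [eop, parBelow, prod_boole, hy]
  by_cases hx : x j = a <;> by_cases hyb : y j = b <;> simp [hx, hyb]

lemma sum_filter_lt_of_lt {M : Type*} [AddCommMonoid M] (f : Fin k → M) {i j : Fin k} (h : i < j) :
    ∑ l ∈ univ.filter (· < j), f l =
      ∑ l ∈ univ.filter (· < i), f l + f i + ∑ l ∈ betw i j, f l := by
  have hsplit : univ.filter (· < j) = insert i (univ.filter (· < i) ∪ betw i j) := by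
    ext l; simp only [mem_filter, mem_univ, true_and, mem_insert, mem_union, mem_betw]
    simp only [Fin.lt_def, Fin.ext_iff] at h ⊢; omega
  have hi : i ∉ univ.filter (· < i) ∪ betw i j := by simp [mem_betw]
  have hdisj : Disjoint (univ.filter (· < i)) (betw i j) :=
    disjoint_left.2 fun l hl hl' => by simp only [mem_filter, mem_betw] at hl hl'; grind
  rw [hsplit, sum_insert hi, sum_union hdisj]; abel

/-- The Koszul exponents of `e^{(i)}_{ab} e^{(j)}_{ba}` only depend on the slots between `i` and
`j`: everything below both slots is counted twice. -/
lemma parBelow_add_parBelow_update_mod_two (x : Fin k → Fin N) {i j : Fin k} (hij : i ≠ j) :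
    (parBelow n x i + parBelow n (Function.update x i (x j)) j) % 2 =
      (par n N (x j) + ∑ l ∈ betw i j, par n N (x l)) % 2 := by
  have hbetw : ∑ l ∈ betw i j, par n N (Function.update x i (x j) l) =
      ∑ l ∈ betw i j, par n N (x l) :=
    sum_congr rfl fun l hl => by rw [Function.update_of_ne (by rintro rfl; simp [mem_betw] at hl)]
  rcases hij.lt_or_gt with h | h
  · have hbelow : ∑ l ∈ univ.filter (· < i), par n N (Function.update x i (x j) l) =
        ∑ l ∈ univ.filter (· < i), par n N (x l) :=
      sum_congr rfl fun l hl => by rw [Function.update_of_ne (by simp at hl; exact hl.ne)]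
    rw [parBelow, parBelow, sum_filter_lt_of_lt _ h, hbelow, hbetw, Function.update_self]
    omega
  · have hbelow : ∑ l ∈ univ.filter (· < j), par n N (Function.update x i (x j) l) =
        ∑ l ∈ univ.filter (· < j), par n N (x l) :=
      sum_congr rfl fun l hl => by rw [Function.update_of_ne (by simp at hl; exact (hl.trans h).ne)]
    rw [parBelow, parBelow, sum_filter_lt_of_lt _ h, hbelow, betw_comm]
    omega

lemma comp_swap_eq_update_update (x : Fin k → Fin N) {i j : Fin k} (hij : i ≠ j) :
    x ∘ Equiv.swap i j = Function.update (Function.update x i (x j)) j (x i) := by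
  ext l
  rcases eq_or_ne l j with rfl | hlj
  · simp
  rcases eq_or_ne l i with rfl | hli
  · simp [hij]
  · simp [hlj, hli, Equiv.swap_apply_of_ne_of_ne hli hlj]

lemma eop_mul_eop_apply {i j : Fin k} (hij : i ≠ j) (a b : Fin N) (x y : Fin k → Fin N) :
    (eop n N k i a b * eop n N k j b a) x y =
      if x i = a ∧ x j = b ∧ y = x ∘ Equiv.swap i j then
        (-1 : ℂ) ^ ((par n N a + par n N b) *
          (parBelow n x i + parBelow n (Function.update x i b) j))
      else 0 := by
  rw [Matrix.mul_apply, sum_eq_single (Function.update x i b)]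
  · simp only [eop_apply, Function.update_of_ne hij.symm]
    by_cases hxi : x i = a
    · by_cases hxj : x j = b
      · subst hxi hxj
        simp [← comp_swap_eq_update_update x hij, ← pow_add, add_comm (par n N (x j)), mul_add]
      · simp [hxj]
    · simp [hxi]
  · intro u _ hu
    rw [eop_apply, if_neg fun h => hu h.2, zero_mul]
  · simp

/-- The sign with which `P_{ij}` sends `e_x` to `e_{x ∘ (i j)}`. -/
noncomputable def pgSign (n : ℕ) (i j : Fin k) (x : Fin k → Fin N) : ℂ :=
  (-1) ^ (par n N (x i) * par n N (x j) +
    (par n N (x i) + par n N (x j)) * ∑ l ∈ betw i j, par n N (x l))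

lemma Pg_apply {i j : Fin k} (hij : i ≠ j) (x y : Fin k → Fin N) :
    Pg n N k i j x y = if y = x ∘ Equiv.swap i j then pgSign n i j x else 0 := by
  simp only [Pg, Matrix.sum_apply, Matrix.smul_apply, smul_eq_mul, eop_mul_eop_apply hij, ite_and,
    mul_ite, mul_zero, sum_ite_irrel, sum_const_zero, sum_ite_eq, mem_univ, if_true]
  refine if_congr Iff.rfl ?_ rfl
  rw [pgSign, ← pow_add]
  apply neg_one_pow_eq_of_mod_two_eq
  have key := parBelow_add_parBelow_update_mod_two (n := n) x hij
  rcases par_eq_zero_or_one (n := n) (x i) with h1 | h1 <;>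
    rcases par_eq_zero_or_one (n := n) (x j) with h2 | h2 <;> simp only [h1, h2] at key ⊢ <;> omega

lemma pgSign_comm (i j : Fin k) (x : Fin k → Fin N) : pgSign n i j x = pgSign n j i x := by
  simp only [pgSign, betw_comm i j, mul_comm (par n N (x i)), add_comm (par n N (x i))]

lemma pgSign_comp_swap (i j : Fin k) (x : Fin k → Fin N) :
    pgSign n i j (x ∘ Equiv.swap i j) = pgSign n i j x := by
  have hbetw : ∀ l ∈ betw i j, (x ∘ Equiv.swap i j) l = x l := fun l hl => by
    have hli : l ≠ i := by simp only [mem_betw] at hl; grind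
    have hlj : l ≠ j := by simp only [mem_betw] at hl; grind
    simp [Equiv.swap_apply_of_ne_of_ne hli hlj]
  simp only [pgSign, sum_congr rfl fun l hl => congrArg (par n N) (hbetw l hl)]
  simp [mul_comm, add_comm]

lemma Pg_comm {i j : Fin k} (hij : i ≠ j) : (Pg n N k i j : Matrix _ _ ℂ) = Pg n N k j i := by
  ext x y
  rw [Pg_apply hij, Pg_apply hij.symm, Equiv.swap_comm, pgSign_comm]

lemma Pg_transpose {i j : Fin k} (hij : i ≠ j) : (Pg n N k i j : Matrix _ _ ℂ)ᵀ = Pg n N k i j := by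
  ext x y
  rw [Matrix.transpose_apply, Pg_apply hij, Pg_apply hij]
  have hxy : x = y ∘ Equiv.swap i j ↔ y = x ∘ Equiv.swap i j := by
    constructor <;> rintro rfl <;> ext <;> simp
  by_cases h : y = x ∘ Equiv.swap i j
  · rw [if_pos (hxy.2 h), if_pos h, h, pgSign_comp_swap]
  · rw [if_neg (mt hxy.1 h), if_neg h]

lemma mul_apply_of_eq_ite_comp {ι β R : Type*} [Fintype ι] [DecidableEq ι] [Fintype β]
    [DecidableEq β] [NonUnitalNonAssocSemiring R] {σ τ : Equiv.Perm ι} {f g : (ι → β) → R}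
    {A B : Matrix (ι → β) (ι → β) R}
    (hA : ∀ x y, A x y = if y = x ∘ σ then f x else 0)
    (hB : ∀ x y, B x y = if y = x ∘ τ then g x else 0) (x y : ι → β) :
    (A * B) x y = if y = x ∘ (σ * τ) then f x * g (x ∘ σ) else 0 := by
  rw [Matrix.mul_apply, sum_eq_single (x ∘ σ), hA, if_pos rfl, hB]
  · simp only [Equiv.Perm.coe_mul, mul_ite, mul_zero]; rfl
  · intro u _ hu; rw [hA, if_neg hu, zero_mul]
  · simp

lemma betw_eq_empty_of_val_eq_succ {i j : Fin k} (hj : (j : ℕ) = i + 1) : betw i j = ∅ := by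
  ext l; simp only [mem_betw, Fin.lt_def, notMem_empty, iff_false]; omega

lemma Pg_mul_Pg_mul_Pg {a i j : Fin k} (hj : (j : ℕ) = i + 1) (hai : a < i) :
    Pg n N k i j * (Pg n N k a i * Pg n N k i j) = Pg n N k a j := by
  have hij : i ≠ j := by simp [Fin.ext_iff, hj]
  have hai' : a ≠ i := hai.ne
  have haj : a ≠ j := by simp only [ne_eq, Fin.ext_iff, hj]; have := Fin.lt_def.1 hai; omega
  have hperm : Equiv.swap i j * (Equiv.swap a i * Equiv.swap i j) = Equiv.swap a j := by
    rw [← mul_assoc, Equiv.swap_mul_swap_mul_swap hai' haj, Equiv.swap_comm]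
  ext x y
  rw [mul_apply_of_eq_ite_comp (Pg_apply hij)
      (mul_apply_of_eq_ite_comp (Pg_apply hai') (Pg_apply hij)), Pg_apply haj, hperm]
  refine if_congr Iff.rfl ?_ rfl
  have hbetw : betw a j = insert i (betw a i) := by
    ext l; simp only [mem_insert, mem_betw, Fin.lt_def, Fin.ext_iff, hj]; omega
  have hi : i ∉ betw a i := by simp [mem_betw]
  have hfix : ∑ l ∈ betw a i, par n N (x (Equiv.swap i j l)) = ∑ l ∈ betw a i, par n N (x l) :=
    sum_congr rfl fun l hl => by
      simp only [mem_betw, Fin.lt_def] at hl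
      rw [Equiv.swap_apply_of_ne_of_ne (by simp [Fin.ext_iff]; omega)
        (by simp [Fin.ext_iff, hj]; omega)]
  have hij0 : betw i j = ∅ := betw_eq_empty_of_val_eq_succ hj
  simp only [pgSign, Function.comp_apply, Equiv.swap_apply_left, Equiv.swap_apply_right,
    Equiv.swap_apply_of_ne_of_ne hai' haj, Equiv.swap_apply_of_ne_of_ne haj.symm hij.symm, hbetw,
    sum_insert hi, hij0, sum_empty, hfix, mul_zero, add_zero, ← pow_add]
  apply neg_one_pow_eq_of_mod_two_eq
  rcases par_eq_zero_or_one (n := n) (x a) with h1 | h1 <;>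
    rcases par_eq_zero_or_one (n := n) (x i) with h2 | h2 <;>
    rcases par_eq_zero_or_one (n := n) (x j) with h3 | h3 <;> simp only [h1, h2, h3] <;> omega

section Omega

variable {ρ : Equiv.Perm (Fin N) →* Matrix (Fin N → Fin N) (Fin N → Fin N) ℂ}

/-- Every transposition is obtained from adjacent ones by conjugation, and the graded
permutations satisfy the same conjugation relations. -/
lemma map_swap_eq_Pg (hρ : ∀ (l : ℕ) (h : l + 1 < N),
      ρ (Equiv.swap ⟨l, Nat.lt_of_succ_lt h⟩ ⟨l + 1, h⟩) =
        Pg n N N ⟨l, Nat.lt_of_succ_lt h⟩ ⟨l + 1, h⟩)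
    {a b : Fin N} (hab : a ≠ b) : ρ (Equiv.swap a b) = Pg n N N a b := by
  have hadj : ∀ c d : Fin N, (d : ℕ) = c + 1 → ρ (Equiv.swap c d) = Pg n N N c d := by
    rintro ⟨c, hc⟩ ⟨d, hd⟩ rfl; exact hρ c hd
  have key : ∀ δ : ℕ, ∀ c d : Fin N, (d : ℕ) = c + δ + 1 →
      ρ (Equiv.swap c d) = Pg n N N c d := by
    intro δ
    induction δ with
    | zero => exact hadj
    | succ δ ih =>
      intro c d hd
      set e : Fin N := ⟨c + δ + 1, by omega⟩
      have hce : c ≠ e := by simp [e, Fin.ext_iff]; omega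
      have hcd : c ≠ d := by simp [Fin.ext_iff]; omega
      have hed : (d : ℕ) = e + 1 := by simp [e]; omega
      rw [Equiv.swap_comm, ← Equiv.swap_mul_swap_mul_swap hce hcd, map_mul, map_mul,
        hadj e d hed, ih c e rfl, mul_assoc, Pg_mul_Pg_mul_Pg hed (by simp [e, Fin.lt_def])]
  rcases hab.lt_or_gt with h | h
  · exact key (b - a - 1) a b (by rw [Fin.lt_def] at h; omega)
  · rw [Equiv.swap_comm, Pg_comm hab, key (a - b - 1) b a (by rw [Fin.lt_def] at h; omega)]

lemma Pg_mulVec_OmegaVec (hρ : ∀ (l : ℕ) (h : l + 1 < N),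
      ρ (Equiv.swap ⟨l, Nat.lt_of_succ_lt h⟩ ⟨l + 1, h⟩) =
        Pg n N N ⟨l, Nat.lt_of_succ_lt h⟩ ⟨l + 1, h⟩)
    (i : ℕ) {a b : Fin N} (hab : a ≠ b) :
    Pg n N N a b *ᵥ OmegaVec N i ρ = (-1 : ℂ) ^ i • OmegaVec N i ρ := by
  rw [← map_swap_eq_Pg hρ hab, OmegaVec, Matrix.mulVec_sum, smul_sum,
    ← Equiv.sum_comp (Equiv.mulLeft (Equiv.swap a b))]
  refine sum_congr rfl fun σ _ => ?_
  rw [Equiv.coe_mulLeft, Matrix.mulVec_smul, Matrix.mulVec_mulVec, ← map_mul, ← mul_assoc,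
    Equiv.swap_mul_self, one_mul, Equiv.Perm.sign_mul, Equiv.Perm.sign_swap hab]
  push_cast
  rw [mul_pow, smul_smul]

lemma dotProduct_OmegaVec_Pg_mulVec (hρ : ∀ (l : ℕ) (h : l + 1 < N),
      ρ (Equiv.swap ⟨l, Nat.lt_of_succ_lt h⟩ ⟨l + 1, h⟩) =
        Pg n N N ⟨l, Nat.lt_of_succ_lt h⟩ ⟨l + 1, h⟩)
    (i : ℕ) {a b : Fin N} (hab : a ≠ b) (v : (Fin N → Fin N) → ℂ) :
    OmegaVec N i ρ ⬝ᵥ (Pg n N N a b *ᵥ v) = (-1 : ℂ) ^ i * OmegaVec N i ρ ⬝ᵥ v := by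
  rw [Matrix.dotProduct_mulVec, ← Matrix.mulVec_transpose, Pg_transpose hab,
    Pg_mulVec_OmegaVec hρ i hab, smul_dotProduct, smul_eq_mul]

end Omega

lemma eop_self_eq_diagonal (j : Fin k) (c : Fin N) :
    eop n N k j c c = Matrix.diagonal fun x => if x j = c then 1 else 0 := by
  ext x y
  rw [eop_apply, Matrix.diagonal_apply]
  by_cases hxc : x j = c
  · subst hxc
    simp [eq_comm, ← two_mul, mul_assoc]
  · simp [hxc]

lemma sum_smul_eop_self (lam : Fin N → ℂ) (j : Fin k) :
    ∑ c, lam c • eop n N k j c c = Matrix.diagonal fun x => lam (x j) := by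
  ext x y
  simp only [eop_self_eq_diagonal, Matrix.sum_apply, Matrix.smul_apply, Matrix.diagonal_apply]
  split_ifs <;> simp

lemma sum_sq_smul_Egen (lam : Fin N → ℂ) :
    ∑ c, lam c ^ 2 • Egen n N k c c =
      ∑ j : Fin k, Matrix.diagonal (fun x => lam (x j)) * Matrix.diagonal (fun x => lam (x j)) := by
  simp only [Egen, smul_sum]
  rw [sum_comm]
  refine sum_congr rfl fun j _ => ?_
  rw [Matrix.diagonal_mul_diagonal, sum_smul_eop_self (fun c => lam c ^ 2)]
  simp only [sq]

lemma diagonal_mul_Pg (lam : Fin N → ℂ) {a j : Fin k} (haj : a ≠ j) :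
    Matrix.diagonal (fun x => lam (x a)) * Pg n N k a j =
      Pg n N k a j * Matrix.diagonal (fun x => lam (x j)) := by
  ext x y
  rw [Matrix.diagonal_mul, Matrix.mul_diagonal, Pg_apply haj]
  split_ifs with h
  · simp [h, mul_comm]
  · simp

lemma sum_sum_filter_ne_eq_zero {ι M : Type*} [Fintype ι] [DecidableEq ι] [AddCommGroup M]
    [IsAddTorsionFree M] (f : ι → ι → M) (hf : ∀ a b, a ≠ b → f a b = -f b a) :
    ∑ a, ∑ b ∈ univ.filter (· ≠ a), f a b = 0 := by
  rw [← self_eq_neg]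
  calc ∑ a, ∑ b ∈ univ.filter (· ≠ a), f a b
      = ∑ b, ∑ a ∈ univ.filter (· ≠ b), f a b := sum_comm' fun a b => by simp [ne_comm]
    _ = -∑ a, ∑ b ∈ univ.filter (· ≠ a), f a b := by
      simp only [← sum_neg_distrib]
      exact sum_congr rfl fun b _ => sum_congr rfl fun a ha => hf a b (by simpa using ha)

lemma inv_sub_mul_inv_sub_add_cyclic {K : Type*} [Field K] {x y w : K} (hxy : x ≠ y) (hxw : x ≠ w)
    (hyw : y ≠ w) :
    (x - y)⁻¹ * (x - w)⁻¹ + (y - w)⁻¹ * (y - x)⁻¹ + (w - x)⁻¹ * (w - y)⁻¹ = 0 := by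
  have := sub_ne_zero.2 hxy; have := sub_ne_zero.2 hxw; have := sub_ne_zero.2 hyw
  have := sub_ne_zero.2 hxy.symm; have := sub_ne_zero.2 hxw.symm; have := sub_ne_zero.2 hyw.symm
  field_simp
  ring

lemma sum_sum_sum_eq_zero_of_cyclic {ι M : Type*} [Fintype ι] [AddCommMonoid M]
    [IsAddTorsionFree M] (t : ι → ι → ι → M) (ht : ∀ a j l, t a j l + t j l a + t l a j = 0) :
    ∑ a, ∑ j, ∑ l, t a j l = 0 := by
  have hrot : ∀ F : ι → ι → ι → M, ∑ a, ∑ j, ∑ l, F j l a = ∑ a, ∑ j, ∑ l, F a j l := fun F => by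
    rw [sum_comm]; exact sum_congr rfl fun _ _ => sum_comm
  refine (nsmul_eq_zero_iff_right three_ne_zero).1 ?_
  calc 3 • ∑ a, ∑ j, ∑ l, t a j l
      = ∑ a, ∑ j, ∑ l, t a j l + ∑ a, ∑ j, ∑ l, t j l a + ∑ a, ∑ j, ∑ l, t l a j := by
        rw [hrot (fun a j l => t l a j), hrot]; abel
    _ = 0 := by simp only [← sum_add_distrib, ht, sum_const_zero]

/-- The cross terms of the squares cancel in cyclic triples. -/
lemma sum_sq_sum_inv_sub {ι K : Type*} [Fintype ι] [DecidableEq ι] [Field K] [CharZero K]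
    {z : ι → K} (hz : Function.Injective z) :
    ∑ a, (∑ j ∈ univ.filter (· ≠ a), (z a - z j)⁻¹) ^ 2 =
      ∑ a, ∑ j ∈ univ.filter (· ≠ a), ((z a - z j) ^ 2)⁻¹ := by
  -- `(z a - z a)⁻¹ = 0`, so the restrictions `j ≠ a` can be dropped
  have hx : ∀ a j, (z a - z j)⁻¹ = 0 ↔ a = j := by simp [sub_eq_zero, hz.eq_iff]
  have hdrop₁ : ∀ a, ∑ j ∈ univ.filter (· ≠ a), (z a - z j)⁻¹ = ∑ j, (z a - z j)⁻¹ := fun a =>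
    sum_filter_of_ne fun j _ hj h => hj ((hx a j).2 h.symm)
  have hdrop₂ : ∀ a, ∑ j ∈ univ.filter (· ≠ a), ((z a - z j) ^ 2)⁻¹ = ∑ j, ((z a - z j) ^ 2)⁻¹ :=
    fun a => sum_filter_of_ne fun j _ hj h => hj (by simp [h])
  set t : ι → ι → ι → K := fun a j l => if l = j then 0 else (z a - z j)⁻¹ * (z a - z l)⁻¹
  have hcyc : ∀ a j l, t a j l + t j l a + t l a j = 0 := by
    intro a j l
    by_cases hja : j = a
    · subst hja; by_cases hlj : l = j <;> simp [t, hlj]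
    by_cases hla : l = a
    · subst hla; simp [t, hja]
    by_cases hlj : l = j
    · subst hlj; simp [t, hla]
    simpa [t, hja, hla, hlj, Ne.symm hja, Ne.symm hla, Ne.symm hlj] using
      inv_sub_mul_inv_sub_add_cyclic (hz.ne (Ne.symm hja)) (hz.ne (Ne.symm hla))
        (hz.ne (Ne.symm hlj))
  have ht : ∑ a, ∑ j, ∑ l, t a j l = 0 := sum_sum_sum_eq_zero_of_cyclic t hcyc
  have hsq : ∀ a, (∑ j, (z a - z j)⁻¹) ^ 2 = ∑ j, ((z a - z j) ^ 2)⁻¹ + ∑ j, ∑ l, t a j l := by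
    intro a
    rw [sq, sum_mul_sum, ← sum_add_distrib]
    refine sum_congr rfl fun j _ => ?_
    calc ∑ l, (z a - z j)⁻¹ * (z a - z l)⁻¹
        = ∑ l, ((if j = l then ((z a - z j) ^ 2)⁻¹ else 0) + t a j l) :=
          sum_congr rfl fun l _ => by
            by_cases hlj : l = j
            · simp [t, hlj, sq]
            · simp [t, hlj, Ne.symm hlj]
      _ = ((z a - z j) ^ 2)⁻¹ + ∑ l, t a j l := by
          rw [sum_add_distrib, sum_ite_eq, if_pos (mem_univ _)]
  simp only [hdrop₁, hdrop₂, hsq, sum_add_distrib, ht, add_zero]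

lemma sum_diagonal_mul_diagonal_mulVec (lam : Fin N → ℂ) {v : (Fin k → Fin N) → ℂ}
    (hv : ∀ c : Fin N, Egen n N k c c *ᵥ v = v) :
    (∑ j : Fin k,
        Matrix.diagonal (fun x => lam (x j)) * Matrix.diagonal (fun x => lam (x j))) *ᵥ v =
      (∑ c, lam c ^ 2) • v := by
  rw [← sum_sq_smul_Egen (n := n), Matrix.sum_mulVec, sum_smul]
  simp only [Matrix.smul_mulVec, hv]

lemma dotProduct_sum_smul_Pg_mulVec {w : (Fin k → Fin N) → ℂ} {s : ℂ}
    (hw : ∀ a b : Fin k, a ≠ b → ∀ u, w ⬝ᵥ (Pg n N k a b *ᵥ u) = s * w ⬝ᵥ u)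
    (c : Fin k → ℂ) (a : Fin k) (u : (Fin k → Fin N) → ℂ) :
    w ⬝ᵥ ((∑ j ∈ univ.filter (· ≠ a), c j • Pg n N k a j) *ᵥ u) =
      s * (∑ j ∈ univ.filter (· ≠ a), c j) * w ⬝ᵥ u := by
  simp only [Matrix.sum_mulVec, dotProduct_sum, Matrix.smul_mulVec, dotProduct_smul, smul_eq_mul,
    sum_mul, mul_sum]
  exact sum_congr rfl fun j hj => by rw [hw a j (by simpa [eq_comm] using hj)]; ring

lemma kzB_eq_diagonal_add (z : Fin k → ℂ) (lam : Fin N → ℂ) (a : Fin k) :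
    kzB n N k z lam a = Matrix.diagonal (fun x => lam (x a)) +
      ∑ j ∈ univ.filter (· ≠ a), (z a - z j)⁻¹ • Pg n N k a j := by
  rw [kzB, sum_smul_eop_self]

theorem sum_dotProduct_kzB_mul_kzB_mulVec {z : Fin k → ℂ} (hz : Function.Injective z)
    (lam : Fin N → ℂ) {w v : (Fin k → Fin N) → ℂ} {s : ℂ} (hs : s ^ 2 = 1)
    (hw : ∀ a b : Fin k, a ≠ b → ∀ u, w ⬝ᵥ (Pg n N k a b *ᵥ u) = s * w ⬝ᵥ u)
    (hv : ∀ c : Fin N, Egen n N k c c *ᵥ v = v) :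
    ∑ a, w ⬝ᵥ ((kzB n N k z lam a * kzB n N k z lam a) *ᵥ v) =
      (∑ c, lam c ^ 2 + ∑ a, ∑ j ∈ univ.filter (· ≠ a), ((z a - z j) ^ 2)⁻¹) * w ⬝ᵥ v := by
  set L : Fin k → Matrix (Fin k → Fin N) (Fin k → Fin N) ℂ :=
    fun a => Matrix.diagonal fun x => lam (x a)
  set C : Fin k → Matrix (Fin k → Fin N) (Fin k → Fin N) ℂ :=
    fun a => ∑ j ∈ univ.filter (· ≠ a), (z a - z j)⁻¹ • Pg n N k a j
  set c : Fin k → ℂ := fun a => ∑ j ∈ univ.filter (· ≠ a), (z a - z j)⁻¹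
  have hC : ∀ a u, w ⬝ᵥ (C a *ᵥ u) = s * c a * w ⬝ᵥ u := fun a u =>
    dotProduct_sum_smul_Pg_mulVec hw _ a u
  have hLL : ∑ a, w ⬝ᵥ ((L a * L a) *ᵥ v) = (∑ c, lam c ^ 2) * w ⬝ᵥ v := by
    rw [← dotProduct_sum, ← Matrix.sum_mulVec, sum_diagonal_mul_diagonal_mulVec lam hv,
      dotProduct_smul, smul_eq_mul]
  have hLC : ∑ a, (w ⬝ᵥ ((L a * C a) *ᵥ v) + w ⬝ᵥ ((C a * L a) *ᵥ v)) = 0 := by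
    have hLCa : ∀ a, w ⬝ᵥ ((L a * C a) *ᵥ v) =
        ∑ j ∈ univ.filter (· ≠ a), (z a - z j)⁻¹ * (s * w ⬝ᵥ (L j *ᵥ v)) := fun a => by
      simp only [C, mul_sum, Matrix.mul_smul, Matrix.sum_mulVec, dotProduct_sum, Matrix.smul_mulVec,
        dotProduct_smul, smul_eq_mul]
      refine sum_congr rfl fun j hj => ?_
      have haj : a ≠ j := by simpa [eq_comm] using hj
      rw [diagonal_mul_Pg lam haj, ← Matrix.mulVec_mulVec, hw a j haj]
    have hCLa : ∀ a, w ⬝ᵥ ((C a * L a) *ᵥ v) =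
        ∑ j ∈ univ.filter (· ≠ a), (z a - z j)⁻¹ * (s * w ⬝ᵥ (L a *ᵥ v)) := fun a => by
      rw [← Matrix.mulVec_mulVec, hC, mul_comm s, mul_assoc, sum_mul]
    simp only [hLCa, hCLa, ← sum_add_distrib]
    refine sum_sum_filter_ne_eq_zero _ fun a j _ => ?_
    rw [← neg_sub, inv_neg]; ring
  have hCC : ∀ a, w ⬝ᵥ ((C a * C a) *ᵥ v) = c a ^ 2 * w ⬝ᵥ v := fun a => by
    rw [← Matrix.mulVec_mulVec, hC, hC]; linear_combination c a ^ 2 * w ⬝ᵥ v * hs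
  calc ∑ a, w ⬝ᵥ ((kzB n N k z lam a * kzB n N k z lam a) *ᵥ v)
      = ∑ a, (w ⬝ᵥ ((L a * L a) *ᵥ v) + (w ⬝ᵥ ((L a * C a) *ᵥ v) + w ⬝ᵥ ((C a * L a) *ᵥ v)) +
          w ⬝ᵥ ((C a * C a) *ᵥ v)) := by
        simp only [kzB_eq_diagonal_add, add_mul, mul_add, Matrix.add_mulVec, dotProduct_add, L, C]
        exact sum_congr rfl fun a _ => by ring
    _ = _ := by
      rw [sum_add_distrib, sum_add_distrib, hLL, hLC]
      simp only [hCC, ← sum_mul, c, sum_sq_sum_inv_sub hz]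
      ring

lemma dotProduct_kzB_mulVec (z : Fin k → ℂ) (lam : Fin N → ℂ) (a : Fin k)
    (w u : (Fin k → Fin N) → ℂ) :
    w ⬝ᵥ (kzB n N k z lam a *ᵥ u) =
      ∑ c, lam c * (w ᵥ* eop n N k a c c) ⬝ᵥ u +
        ∑ j ∈ univ.filter (· ≠ a), (z a - z j)⁻¹ * (w ᵥ* Pg n N k a j) ⬝ᵥ u := by
  simp only [kzB, Matrix.add_mulVec, Matrix.sum_mulVec, Matrix.smul_mulVec, dotProduct_add,
    dotProduct_sum, dotProduct_smul, smul_eq_mul, Matrix.dotProduct_mulVec]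

section Analysis

variable {E V : Type*} [NormedAddCommGroup E] [NormedSpace ℂ E] [Fintype V]

noncomputable def dotProductCLM (u : V → ℂ) : (V → ℂ) →L[ℂ] ℂ :=
  LinearMap.toContinuousLinearMap (dotProductBilin ℂ ℂ u)

@[simp]
lemma dotProductCLM_apply (u v : V → ℂ) : dotProductCLM u v = u ⬝ᵥ v := by
  rw [dotProductCLM, LinearMap.coe_toContinuousLinearMap', dotProductBilin_apply_apply]

lemma HasFDerivAt.const_dotProduct {f : E → V → ℂ} {f' : E →L[ℂ] V → ℂ} {x : E}
    (hf : HasFDerivAt f f' x) (u : V → ℂ) :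
    HasFDerivAt (fun y => u ⬝ᵥ f y) ((dotProductCLM u).comp f') x :=
  funext (fun y => dotProductCLM_apply u (f y)) ▸ (dotProductCLM u).hasFDerivAt.comp x hf

end Analysis

theorem fderiv_dotProduct_kzB_mulVec {Ψ : (Fin k → ℂ) × (Fin N → ℂ) → (Fin k → Fin N) → ℂ}
    {p : (Fin k → ℂ) × (Fin N → ℂ)} (hΨ : DifferentiableAt ℂ Ψ p) (hz : Function.Injective p.1)
    (w : (Fin k → Fin N) → ℂ) (a : Fin k) :
    fderiv ℂ (fun q => w ⬝ᵥ (kzB n N k q.1 q.2 a *ᵥ Ψ q)) p (Pi.single a 1, 0) =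
      w ⬝ᵥ (kzB n N k p.1 p.2 a *ᵥ fderiv ℂ Ψ p (Pi.single a 1, 0)) -
        ∑ j ∈ univ.filter (· ≠ a), ((p.1 a - p.1 j) ^ 2)⁻¹ * w ⬝ᵥ (Pg n N k a j *ᵥ Ψ p) := by
  have hlam : ∀ c : Fin N, HasFDerivAt (fun q : (Fin k → ℂ) × (Fin N → ℂ) => q.2 c)
      ((ContinuousLinearMap.proj c).comp (ContinuousLinearMap.snd ℂ (Fin k → ℂ) (Fin N → ℂ))) p :=
    fun c => ((ContinuousLinearMap.proj c).comp
      (ContinuousLinearMap.snd ℂ (Fin k → ℂ) (Fin N → ℂ))).hasFDerivAt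
  have hzc : ∀ j : Fin k, HasFDerivAt (fun q : (Fin k → ℂ) × (Fin N → ℂ) => q.1 j)
      ((ContinuousLinearMap.proj j).comp (ContinuousLinearMap.fst ℂ (Fin k → ℂ) (Fin N → ℂ))) p :=
    fun j => ((ContinuousLinearMap.proj j).comp
      (ContinuousLinearMap.fst ℂ (Fin k → ℂ) (Fin N → ℂ))).hasFDerivAt
  have hinv : ∀ j ∈ univ.filter (· ≠ a), HasFDerivAt
      (fun q : (Fin k → ℂ) × (Fin N → ℂ) => (q.1 a - q.1 j)⁻¹) _ p := fun j hj => by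
    have h := (hasFDerivAt_inv (sub_ne_zero.2 (hz.ne (by simpa [eq_comm] using hj)))).comp p
      ((hzc a).sub (hzc j))
    exact h
  have hG := ((HasFDerivAt.fun_sum (u := univ) fun c _ => (hlam c).mul
      (HasFDerivAt.const_dotProduct hΨ.hasFDerivAt (w ᵥ* eop n N k a c c))).add
    (HasFDerivAt.fun_sum fun j hj => (hinv j hj).mul
      (HasFDerivAt.const_dotProduct hΨ.hasFDerivAt (w ᵥ* Pg n N k a j))))
  rw [(hG.congr_of_eventuallyEq (Filter.Eventually.of_forall fun q =>
    dotProduct_kzB_mulVec q.1 q.2 a w (Ψ q))).fderiv, dotProduct_kzB_mulVec]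
  simp only [add_apply, _root_.sum_apply, smul_apply, ContinuousLinearMap.comp_apply, sub_apply,
    dotProductCLM_apply, ContinuousLinearMap.coe_fst', ContinuousLinearMap.coe_snd',
    ContinuousLinearMap.proj_apply, ContinuousLinearMap.toSpanSingleton_apply, Pi.single_eq_same,
    Pi.zero_apply, smul_eq_mul, mul_zero, add_zero]
  rw [add_sub_assoc, ← sum_sub_distrib]
  congr 1
  refine sum_congr rfl fun j hj => ?_
  rw [Pi.single_eq_of_ne (by simpa using hj), Matrix.dotProduct_mulVec]
  ring

theorem sq_mul_fderiv_fderiv_dotProduct_of_kz {U : Set ((Fin k → ℂ) × (Fin N → ℂ))}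
    (hU : IsOpen U) {Ψ : (Fin k → ℂ) × (Fin N → ℂ) → (Fin k → Fin N) → ℂ} {κ : ℂ} (hκ : κ ≠ 0)
    (hdiff : ∀ q ∈ U, DifferentiableAt ℂ Ψ q)
    (hKZ : ∀ q ∈ U, ∀ j : Fin k,
      κ • fderiv ℂ Ψ q (Pi.single j 1, 0) = kzB n N k q.1 q.2 j *ᵥ Ψ q)
    (w : (Fin k → Fin N) → ℂ) {p : (Fin k → ℂ) × (Fin N → ℂ)} (hp : p ∈ U)
    (hz : Function.Injective p.1) (a : Fin k) :
    κ ^ 2 * fderiv ℂ (fun q => fderiv ℂ (fun r => w ⬝ᵥ Ψ r) q (Pi.single a 1, 0)) p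
        (Pi.single a 1, 0) =
      w ⬝ᵥ ((kzB n N k p.1 p.2 a * kzB n N k p.1 p.2 a) *ᵥ Ψ p) -
        κ * ∑ j ∈ univ.filter (· ≠ a), ((p.1 a - p.1 j) ^ 2)⁻¹ * w ⬝ᵥ (Pg n N k a j *ᵥ Ψ p) := by
  have hfirst : ∀ q ∈ U, fderiv ℂ (fun r => w ⬝ᵥ Ψ r) q (Pi.single a 1, 0) =
      (κ⁻¹ • w) ⬝ᵥ (kzB n N k q.1 q.2 a *ᵥ Ψ q) := fun q hq => by
    rw [(HasFDerivAt.const_dotProduct (hdiff q hq).hasFDerivAt w).fderiv,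
      ContinuousLinearMap.comp_apply, dotProductCLM_apply, ← hKZ q hq a, dotProduct_smul,
      smul_dotProduct, smul_smul, mul_inv_cancel₀ hκ, one_smul]
  have hΨ : fderiv ℂ Ψ p (Pi.single a 1, 0) = κ⁻¹ • (kzB n N k p.1 p.2 a *ᵥ Ψ p) := by
    rw [← hKZ p hp a, smul_smul, inv_mul_cancel₀ hκ, one_smul]
  rw [Filter.EventuallyEq.fderiv_eq (Filter.eventually_of_mem (hU.mem_nhds hp) hfirst),
    fderiv_dotProduct_kzB_mulVec (hdiff p hp) hz, hΨ, ← Matrix.mulVec_mulVec]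
  simp only [smul_dotProduct, Matrix.mulVec_smul, dotProduct_smul, smul_eq_mul]
  rw [mul_sub, mul_sum, mul_sum]
  congr 1
  · field_simp
  · exact sum_congr rfl fun j _ => by field_simp

lemma isOpen_Usep (N : ℕ) : IsOpen (Usep N) := by
  simp only [Usep, Set.ofPred_and, Set.ofPred_forall]
  exact (isOpen_iInter_of_finite fun i => isOpen_iInter_of_finite fun j => isOpen_iInter_of_finite
      fun _ => isOpen_ne_fun (by fun_prop) (by fun_prop)).inter
    (isOpen_iInter_of_finite fun a => isOpen_iInter_of_finite fun b => isOpen_iInter_of_finite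
      fun _ => isOpen_ne_fun (by fun_prop) (by fun_prop))

end Glnm

open Glnm in
theorem matsuo_cherednik_kz_general (n m : ℕ) (κ : ℂ) (hκ : κ ≠ 0)
    (Ψ : (Fin (n + m) → ℂ) × (Fin (n + m) → ℂ) → ((Fin (n + m) → Fin (n + m)) → ℂ))
    (hdiff : ∀ p ∈ Usep (n + m), DifferentiableAt ℂ Ψ p)
    (hKZ : ∀ p ∈ Usep (n + m), ∀ j : Fin (n + m),
      κ • (fderiv ℂ Ψ p (Pi.single j 1, 0)) =
        Matrix.mulVec (kzB n (n + m) (n + m) p.1 p.2 j) (Ψ p))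
    (hwt : ∀ p ∈ Usep (n + m), ∀ a : Fin (n + m),
      Matrix.mulVec (Egen n (n + m) (n + m) a a) (Ψ p) = Ψ p)
    (i : ℕ)
    (ρ : Equiv.Perm (Fin (n + m)) →*
      Matrix (Fin (n + m) → Fin (n + m)) (Fin (n + m) → Fin (n + m)) ℂ)
    (hρ : ∀ (l : ℕ) (h : l + 1 < n + m),
      ρ (Equiv.swap ⟨l, Nat.lt_of_succ_lt h⟩ ⟨l + 1, h⟩) =
        Pg n (n + m) (n + m) ⟨l, Nat.lt_of_succ_lt h⟩ ⟨l + 1, h⟩) :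
    ∀ p ∈ Usep (n + m),
      κ ^ 2 * (∑ a : Fin (n + m),
          fderiv ℂ
            (fun q =>
              fderiv ℂ (fun r => dotProduct (OmegaVec (n + m) i ρ) (Ψ r)) q
                (Pi.single a 1, 0))
            p (Pi.single a 1, 0)) +
        (∑ a : Fin (n + m), ∑ b ∈ Finset.univ.filter (fun b : Fin (n + m) => b ≠ a),
            ((-1 : ℂ) ^ i * κ - 1) / (p.1 a - p.1 b) ^ 2) *
          dotProduct (OmegaVec (n + m) i ρ) (Ψ p) =
      (∑ a : Fin (n + m), (p.2 a) ^ 2) *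
        dotProduct (OmegaVec (n + m) i ρ) (Ψ p) := by
  intro p hp
  set Ω := OmegaVec (n + m) i ρ
  have hz : Function.Injective p.1 := fun a b h => by_contra fun hab => hp.1 a b hab h
  have hΩ : ∀ a b, a ≠ b → ∀ v, Ω ⬝ᵥ (Pg n (n + m) (n + m) a b *ᵥ v) = (-1) ^ i * Ω ⬝ᵥ v :=
    fun a b hab => dotProduct_OmegaVec_Pg_mulVec hρ i hab
  have hsecond : ∀ a, κ ^ 2 * fderiv ℂ (fun q => fderiv ℂ (fun r => Ω ⬝ᵥ Ψ r) q (Pi.single a 1, 0))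
      p (Pi.single a 1, 0) = Ω ⬝ᵥ ((kzB n _ _ p.1 p.2 a * kzB n _ _ p.1 p.2 a) *ᵥ Ψ p) -
        (-1) ^ i * κ * (∑ b ∈ univ.filter (· ≠ a), ((p.1 a - p.1 b) ^ 2)⁻¹) * Ω ⬝ᵥ Ψ p :=
    fun a => by
      rw [sq_mul_fderiv_fderiv_dotProduct_of_kz (isOpen_Usep _) hκ hdiff hKZ Ω hp hz,
        sum_congr rfl fun b hb => by rw [hΩ a b (by simpa [eq_comm] using hb)]]
      simp only [sum_mul, mul_sum]
      exact congrArg _ (sum_congr rfl fun _ _ => by ring)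
  have hsum := sum_dotProduct_kzB_mul_kzB_mulVec hz p.2
    (by rw [← pow_mul, mul_comm, pow_mul, neg_one_sq, one_pow]) hΩ (hwt p hp)
  have hcoef : ∑ a, ∑ b ∈ univ.filter (· ≠ a), ((-1 : ℂ) ^ i * κ - 1) / (p.1 a - p.1 b) ^ 2 =
      ((-1) ^ i * κ - 1) * ∑ a, ∑ b ∈ univ.filter (· ≠ a), ((p.1 a - p.1 b) ^ 2)⁻¹ := by
    simp only [div_eq_mul_inv, mul_sum]
  rw [mul_sum, sum_congr rfl fun a _ => hsecond a, sum_sub_distrib, hsum,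
    ← sum_mul, ← mul_sum, hcoef]
  ring

open Glnm in
/-- Matsuo–Cherednik map, KZ side: `φ_i = Ω^i ⬝ Ψ` satisfies
the Calogero-type eigenvalue equation in the `z` variables with eigenvalue `∑ λ_a²`. -/
theorem matsuo_cherednik_kz (n m : ℕ) (κ : ℂ) (hκ : κ ≠ 0)
    (Ψ : (Fin (n + m) → ℂ) × (Fin (n + m) → ℂ) → ((Fin (n + m) → Fin (n + m)) → ℂ))
    (hdiff : ∀ p ∈ Usep (n + m), DifferentiableAt ℂ Ψ p)
    (hKZ : ∀ p ∈ Usep (n + m), ∀ j : Fin (n + m),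
      κ • (fderiv ℂ Ψ p (Pi.single j 1, 0)) =
        Matrix.mulVec (kzB n (n + m) (n + m) p.1 p.2 j) (Ψ p))
    (hDyn : ∀ p ∈ Usep (n + m), ∀ a : Fin (n + m),
      κ • (fderiv ℂ Ψ p (0, Pi.single a 1)) =
        Matrix.mulVec (dynA n (n + m) (n + m) p.1 p.2 a) (Ψ p))
    (hwt : ∀ p ∈ Usep (n + m), ∀ a : Fin (n + m),
      Matrix.mulVec (Egen n (n + m) (n + m) a a) (Ψ p) = Ψ p)
    (i : ℕ) (hi : i = 0 ∨ i = 1)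
    (ρ : Equiv.Perm (Fin (n + m)) →*
      Matrix (Fin (n + m) → Fin (n + m)) (Fin (n + m) → Fin (n + m)) ℂ)
    (hρ : ∀ (l : ℕ) (h : l + 1 < n + m),
      ρ (Equiv.swap ⟨l, Nat.lt_of_succ_lt h⟩ ⟨l + 1, h⟩) =
        Pg n (n + m) (n + m) ⟨l, Nat.lt_of_succ_lt h⟩ ⟨l + 1, h⟩) :
    ∀ p ∈ Usep (n + m),
      κ ^ 2 * (∑ a : Fin (n + m),
          fderiv ℂ
            (fun q =>
              fderiv ℂ (fun r => dotProduct (OmegaVec (n + m) i ρ) (Ψ r)) q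
                (Pi.single a 1, 0))
            p (Pi.single a 1, 0)) +
        (∑ a : Fin (n + m), ∑ b ∈ Finset.univ.filter (fun b : Fin (n + m) => b ≠ a),
            ((-1 : ℂ) ^ i * κ - 1) / (p.1 a - p.1 b) ^ 2) *
          dotProduct (OmegaVec (n + m) i ρ) (Ψ p) =
      (∑ a : Fin (n + m), (p.2 a) ^ 2) *
        dotProduct (OmegaVec (n + m) i ρ) (Ψ p) :=
  matsuo_cherednik_kz_general n m κ hκ Ψ hdiff hKZ hwt i ρ hρ
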